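/- arXiv:1812.08041 — 8 statements merged into one kernel-verified Lean document; each statement's English description precedes it below -/
import Mathlib

section
/- Let n_1, n_2, n_3 be positive integers such that no prime divides all three of them. Then there exists an integer k ≥ 2 such that gcd(n_1, n_2 + k·n_3) = 1. -/
theorem stmt2 (n₁ n₂ n₃ : ℕ) (h₁ : 0 < n₁) (h₂ : 0 < n₂) (h₃ : 0 < n₃)
    (hgcd : Nat.gcd n₁ (Nat.gcd n₂ n₃) = 1) :
    ∃ k : ℕ, 2 ≤ k ∧ Nat.gcd n₁ (n₂ + k * n₃) = 1 := by
  classical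
  set s : Finset ℕ := n₁.primeFactors.filter (fun p => ¬ p ∣ n₂) with hs
  set k' : ℕ := s.prod id with hk'
  have hk'pos : 0 < k' := by
    apply Finset.prod_pos
    intro p hp
    have := Nat.prime_of_mem_primeFactors (Finset.mem_filter.mp hp).1
    exact this.pos
  refine ⟨k' * (n₁ + 1), ?_, ?_⟩
  · calc 2 = 1 * 2 := by ring
    _ ≤ k' * (n₁ + 1) := Nat.mul_le_mul hk'pos (by omega)
  · by_contra hne
    obtain ⟨p, hp, hpdvd⟩ := Nat.exists_prime_and_dvd hne
    have hpn₁ : p ∣ n₁ := hpdvd.trans (Nat.gcd_dvd_left _ _)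
    have hpsum : p ∣ n₂ + k' * (n₁ + 1) * n₃ := hpdvd.trans (Nat.gcd_dvd_right _ _)
    by_cases hpn₂ : p ∣ n₂
    · -- then p ∤ n₃ and p ∤ k', p ∤ n₁+1
      have hpn₃ : ¬ p ∣ n₃ := by
        intro hpn₃
        have : p ∣ Nat.gcd n₁ (Nat.gcd n₂ n₃) :=
          Nat.dvd_gcd hpn₁ (Nat.dvd_gcd hpn₂ hpn₃)
        rw [hgcd] at this
        exact hp.one_lt.ne' (Nat.dvd_one.mp this)
      have hpk' : ¬ p ∣ k' := by
        intro hpk'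
        obtain ⟨q, hq, hpq⟩ := hp.prime.exists_mem_finset_dvd hpk'
        have hq' := Finset.mem_filter.mp hq
        have hqprime := Nat.prime_of_mem_primeFactors hq'.1
        have : p = q := (Nat.prime_dvd_prime_iff_eq hp hqprime).mp hpq
        exact hq'.2 (this ▸ hpn₂)
      have hpn₁1 : ¬ p ∣ n₁ + 1 := by
        intro h
        have h1 : p ∣ 1 := by
          have := Nat.dvd_sub h hpn₁
          simpa using this
        exact hp.one_lt.ne' (Nat.dvd_one.mp h1)
      have hd : p ∣ k' * (n₁ + 1) * n₃ := (Nat.dvd_add_right hpn₂).mp hpsum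
      rcases hp.dvd_mul.mp hd with h | h
      · rcases hp.dvd_mul.mp h with h' | h'
        · exact hpk' h'
        · exact hpn₁1 h'
      · exact hpn₃ h
    · -- p ∈ s, so p ∣ k', hence p ∣ n₂
      have hps : p ∈ s := Finset.mem_filter.mpr
        ⟨Nat.mem_primeFactors.mpr ⟨hp, hpn₁, h₁.ne'⟩, hpn₂⟩
      have hpk' : p ∣ k' := Finset.dvd_prod_of_mem id hps
      have : p ∣ n₂ := (Nat.dvd_add_right (Dvd.dvd.mul_right (hpk'.mul_right _) n₃)).mp
        (by rwa [Nat.add_comm] at hpsum)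
      exact hpn₂ this
end

section
/- Let a, b be integers with |a| > |b| ≥ 2. Define x_0 = b⁴ − 1, x_1 = b⁴, and x_{n+1} = a·x_n + b·x_{n-1}. Then x_0 and x_1 are relatively prime composite positive integers, x_n ≡ 0 (mod b) for all n ≥ 1, and |x_n| is composite for all n ≥ 0. -/
theorem stmt7 (a b : ℤ) (hb : 2 ≤ |b|) (hab : |b| < |a|) (x : ℕ → ℤ)
    (hx0 : x 0 = b ^ 4 - 1) (hx1 : x 1 = b ^ 4)
    (hrec : ∀ n : ℕ, x (n + 2) = a * x (n + 1) + b * x n) :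
    IsCoprime (x 0) (x 1) ∧
    0 < x 0 ∧ 0 < x 1 ∧
    ((x 0).natAbs ≠ 0 ∧ (x 0).natAbs ≠ 1 ∧ ¬ Nat.Prime (x 0).natAbs) ∧
    ((x 1).natAbs ≠ 0 ∧ (x 1).natAbs ≠ 1 ∧ ¬ Nat.Prime (x 1).natAbs) ∧
    (∀ n : ℕ, 1 ≤ n → b ∣ x n) ∧
    (∀ n : ℕ, (x n).natAbs ≠ 0 ∧ (x n).natAbs ≠ 1 ∧ ¬ Nat.Prime (x n).natAbs) := by
  have hb2 : (4:ℤ) ≤ b ^ 2 := by nlinarith [sq_abs b]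
  have hb4 : (16:ℤ) ≤ b ^ 4 := by nlinarith
  have hbne : b ≠ 0 := by intro h; simp [h] at hb
  -- strict growth of |x n|
  have hmono : ∀ n : ℕ, |x n| < |x (n + 1)| := by
    intro n
    induction n with
    | zero =>
      rw [hx0, hx1]
      rw [abs_of_nonneg (by linarith), abs_of_nonneg (by linarith)]
      linarith
    | succ n ih =>
      have hrn := hrec n
      have h1 : |a * x (n+1)| ≤ |x (n+2)| + |b * x n| := by
        calc |a * x (n+1)| = |(a * x (n+1) + b * x n) + (-(b * x n))| := by ring_nf
          _ ≤ |a * x (n+1) + b * x n| + |(-(b * x n))| := abs_add_le _ _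
          _ = |x (n+2)| + |b * x n| := by rw [abs_neg, hrn]
      rw [abs_mul, abs_mul] at h1
      have hY : (0:ℤ) ≤ |x (n+1)| := abs_nonneg _
      have hX : (0:ℤ) ≤ |x n| := abs_nonneg _
      nlinarith [mul_nonneg (by linarith : (0:ℤ) ≤ |a| - |b| - 1) hY,
        mul_nonneg (by linarith : (0:ℤ) ≤ |b| - 2) (by linarith : (0:ℤ) ≤ |x (n+1)| - |x n| - 1)]
  have hge : ∀ n : ℕ, b ^ 4 - 1 ≤ |x n| := by
    intro n
    induction n with
    | zero => rw [hx0, abs_of_nonneg (by linarith)]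
    | succ n ih => have := hmono n; linarith
  -- divisibility
  have hdvd : ∀ n : ℕ, b ∣ x (n + 1) := by
    intro n
    induction n using Nat.strong_induction_on with
    | _ n ih =>
      match n with
      | 0 => rw [hx1]; exact Dvd.intro (b^3) (by ring)
      | 1 =>
        rw [hrec 0, hx0, hx1]
        exact ⟨a * b ^ 3 + b ^ 4 - 1, by ring⟩
      | (m + 2) =>
        rw [hrec (m + 1)]
        exact dvd_add (Dvd.dvd.mul_left (ih (m + 1) (by omega)) a)
          (Dvd.dvd.mul_right (dvd_refl b) _)
  -- compositeness for n ≥ 1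
  have hcomp1 : ∀ n : ℕ, (x (n+1)).natAbs ≠ 0 ∧ (x (n+1)).natAbs ≠ 1 ∧
      ¬ Nat.Prime (x (n+1)).natAbs := by
    intro n
    have hg := hge (n + 1)
    have hgt : |b| < |x (n+1)| := by
      nlinarith [sq_abs b, mul_nonneg (sub_nonneg.2 hb) (abs_nonneg b),
        mul_nonneg (by linarith : (0:ℤ) ≤ b ^ 2 - 4) (by positivity : (0:ℤ) ≤ b ^ 2)]
    have hdvdn : b.natAbs ∣ (x (n+1)).natAbs := Int.natAbs_dvd_natAbs.mpr (hdvd n)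
    have hbn : 2 ≤ b.natAbs := by
      have := hb; rw [Int.abs_eq_natAbs] at this; exact_mod_cast this
    have hxn : b.natAbs < (x (n+1)).natAbs := by
      rw [Int.abs_eq_natAbs, Int.abs_eq_natAbs] at hgt; exact_mod_cast hgt
    refine ⟨by omega, by omega, fun hp => ?_⟩
    rcases (Nat.Prime.eq_one_or_self_of_dvd hp _ hdvdn) with h | h <;> omega
  -- compositeness for n = 0
  have hx0comp : (x 0).natAbs ≠ 0 ∧ (x 0).natAbs ≠ 1 ∧ ¬ Nat.Prime (x 0).natAbs := by
    have hfac : x 0 = (b ^ 2 - 1) * (b ^ 2 + 1) := by rw [hx0]; ring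
    have h1 : (3:ℤ) ≤ b ^ 2 - 1 := by linarith
    have h2 : (5:ℤ) ≤ b ^ 2 + 1 := by linarith
    have hd1 : (b ^ 2 - 1).natAbs ∣ (x 0).natAbs :=
      Int.natAbs_dvd_natAbs.mpr ⟨b ^ 2 + 1, hfac⟩
    have hn1 : 3 ≤ (b ^ 2 - 1).natAbs := by
      have : (3:ℤ) ≤ |b ^ 2 - 1| := by rw [abs_of_nonneg (by linarith)]; exact h1
      rw [Int.abs_eq_natAbs] at this; exact_mod_cast this
    have hlt : (b ^ 2 - 1).natAbs < (x 0).natAbs := by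
      have : b ^ 2 - 1 < x 0 := by rw [hx0]; nlinarith
      have h0 : (0:ℤ) ≤ b ^ 2 - 1 := by linarith
      have h0' : (0:ℤ) ≤ x 0 := by rw [hx0]; linarith
      omega
    have hne : (x 0).natAbs ≠ 0 := by omega
    refine ⟨hne, by omega, fun hp => ?_⟩
    rcases (Nat.Prime.eq_one_or_self_of_dvd hp _ hd1) with h | h <;> omega
  refine ⟨⟨-1, 1, by rw [hx0, hx1]; ring⟩, by rw [hx0]; linarith, by rw [hx1]; linarith,
    hx0comp, by simpa using hcomp1 0, ?_, ?_⟩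
  · intro n hn
    obtain ⟨m, rfl⟩ : ∃ m, n = m + 1 := ⟨n - 1, by omega⟩
    exact hdvd m
  · intro n
    match n with
    | 0 => exact hx0comp
    | (m + 1) => exact hcomp1 m
end

section
/- Let a, b be integers with |b| ≥ 2, 1 ≤ |a| ≤ |b|, and a² + 4b ≠ 0. Then 16b⁸ + 8ab⁵ − 8b⁴ − 4b³ − 2ab + 1 is not a perfect square. -/
theorem stmt8 (a b : ℤ) (hb : 2 ≤ |b|) (ha : 1 ≤ |a|) (hab : |a| ≤ |b|)
    (hdisc : a ^ 2 + 4 * b ≠ 0) :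
    ¬ ∃ c : ℤ, c ^ 2 = 16 * b ^ 8 + 8 * a * b ^ 5 - 8 * b ^ 4 - 4 * b ^ 3 - 2 * a * b + 1 := by
  rintro ⟨c, hc⟩
  set N : ℤ := 4 * b ^ 4 + a * b - 1 with hN
  have key : c ^ 2 = N ^ 2 - b ^ 2 * (a ^ 2 + 4 * b) := by rw [hc, hN]; ring
  have hb2 : 4 ≤ b ^ 2 := by nlinarith [sq_abs b, abs_nonneg b]
  have ha2 : a ^ 2 ≤ b ^ 2 := by nlinarith [sq_abs a, sq_abs b, abs_nonneg a]
  have habs : |a * b| ≤ b ^ 2 := by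
    rw [abs_mul]
    calc |a| * |b| ≤ |b| * |b| := mul_le_mul_of_nonneg_right hab (abs_nonneg b)
    _ = b ^ 2 := by rw [← sq_abs]; ring
  have hab1 : a * b ≤ b ^ 2 := le_trans (le_abs_self _) habs
  have hab2 : -(b ^ 2) ≤ a * b := by
    have := neg_abs_le (a * b); linarith
  have hbb : 2 * |b| ≤ b ^ 2 := by nlinarith [sq_abs b, abs_nonneg b]
  have h4b : 4 * b ≤ 2 * b ^ 2 := by
    have := le_abs_self b; linarith
  have h4b' : -(2 * b ^ 2) ≤ 4 * b := by
    have := neg_abs_le b; linarith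
  have hNpos : 0 < N := by nlinarith [sq_nonneg (b ^ 2)]
  have hm : |c| ^ 2 = c ^ 2 := sq_abs c
  have hc0 : 0 ≤ |c| := abs_nonneg c
  rcases lt_or_gt_of_ne hdisc with hd | hd
  · -- a^2 + 4b < 0 : N^2 < c^2 < (N+1)^2
    have hdle : -(a ^ 2 + 4 * b) ≤ 2 * b ^ 2 - 1 := by nlinarith [sq_abs a, ha]
    have h1 : N ^ 2 < |c| ^ 2 := by
      rw [hm, key]; nlinarith [sq_nonneg b]
    have h2 : |c| ^ 2 < (N + 1) ^ 2 := by
      rw [hm, key]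
      nlinarith [sq_nonneg b, mul_le_mul_of_nonneg_left hdle (sq_nonneg b), sq_nonneg (b^2 - 2)]
    have l1 : N < |c| := lt_of_pow_lt_pow_left₀ 2 hc0 h1
    have l2 : |c| < N + 1 := lt_of_pow_lt_pow_left₀ 2 (by linarith) h2
    omega
  · -- a^2 + 4b > 0 : (N-1)^2 < c^2 < N^2
    have hdle : a ^ 2 + 4 * b ≤ 3 * b ^ 2 := by linarith
    have h1 : (N - 1) ^ 2 < |c| ^ 2 := by
      rw [hm, key]
      nlinarith [mul_le_mul_of_nonneg_left hdle (sq_nonneg b), sq_nonneg (b^2 - 1)]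
    have h2 : |c| ^ 2 < N ^ 2 := by
      rw [hm, key]; nlinarith [sq_nonneg b]
    have l1 : N - 1 < |c| := lt_of_pow_lt_pow_left₀ 2 hc0 h1
    have l2 : |c| < N := lt_of_pow_lt_pow_left₀ 2 (le_of_lt hNpos) h2
    omega
end

section
/- Let b be an integer with b > 1 and let (x_n) satisfy x_0 = (2b²−1)², x_1 = b(b²−1), and x_{n+1} = x_n + b·x_{n-1} (i.e., a = 1). Then x_2 = b³(4b²−3), and for all n ≥ 3, x_n ≡ 0 (mod b²) and x_n/b² ≡ −1 (mod b). -/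
theorem stmt10 (b : ℤ) (hb : 2 ≤ b) (x : ℕ → ℤ)
    (hx0 : x 0 = (2 * b ^ 2 - 1) ^ 2) (hx1 : x 1 = b * (b ^ 2 - 1))
    (hrec : ∀ n : ℕ, x (n + 2) = 1 * x (n + 1) + b * x n) :
    x 2 = b ^ 3 * (4 * b ^ 2 - 3) ∧
    ∀ n : ℕ, 3 ≤ n → b ^ 2 ∣ x n ∧ x n / b ^ 2 ≡ -1 [ZMOD b] := by
  have hb0 : (b : ℤ) ^ 2 ≠ 0 := by positivity
  have hx2 : x 2 = b ^ 3 * (4 * b ^ 2 - 3) := by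
    have := hrec 0; rw [hx0, hx1] at this; rw [this]; ring
  have key : ∀ n : ℕ, (b ^ 2 ∣ x (n + 2)) ∧ (b ^ 3 ∣ x (n + 3) + b ^ 2) := by
    intro n
    induction n with
    | zero =>
      constructor
      · exact ⟨b * (4 * b ^ 2 - 3), by rw [hx2]; ring⟩
      · have := hrec 1; rw [hx1, hx2] at this
        exact ⟨4 * b ^ 2 - 3 + b, by rw [this]; ring⟩
    | succ k ih =>
      obtain ⟨⟨m, hm⟩, ⟨p, hp⟩⟩ := ih
      have h3 : b ^ 3 ∣ x (k + 4) + b ^ 2 := by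
        have hr := hrec (k + 2)
        refine ⟨p + m, ?_⟩
        have : x (k + 2 + 2) = 1 * x (k + 3) + b * x (k + 2) := hr
        rw [show k + 2 + 2 = k + 4 from rfl] at this
        rw [this, hm]
        have hx3 : x (k + 3) = b ^ 3 * p - b ^ 2 := by linarith
        rw [hx3]; ring
      refine ⟨⟨b * p - 1, ?_⟩, h3⟩
      have hx3 : x (k + 3) = b ^ 3 * p - b ^ 2 := by linarith
      rw [hx3]; ring
  refine ⟨hx2, fun n hn => ?_⟩
  obtain ⟨k, rfl⟩ : ∃ k, n = k + 3 := ⟨n - 3, by omega⟩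
  obtain ⟨_, ⟨p, hp⟩⟩ := key k
  have hxn : x (k + 3) = b ^ 2 * (b * p - 1) := by linarith
  constructor
  · exact ⟨b * p - 1, hxn⟩
  · rw [hxn, Int.mul_ediv_cancel_left _ hb0]
    exact Int.ModEq.symm (Int.modEq_iff_dvd.mpr ⟨p, by ring⟩)
end

section
/- Let a, b be integers with 2 ≤ a < b, and let (x_n) satisfy x_0 = a³, x_1 = b(b²−a²), and x_{n+1} = a·x_n + b·x_{n-1}. Then x_2 = a·b³, and for all n ≥ 3, x_n ≡ 0 (mod b²) and x_n/b² ≡ −a^{n−1} (mod b). -/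
theorem stmt11 (a b : ℤ) (ha : 2 ≤ a) (hab : a < b) (x : ℕ → ℤ)
    (hx0 : x 0 = a ^ 3) (hx1 : x 1 = b * (b ^ 2 - a ^ 2))
    (hrec : ∀ n : ℕ, x (n + 2) = a * x (n + 1) + b * x n) :
    x 2 = a * b ^ 3 ∧
    ∀ n : ℕ, 3 ≤ n → b ^ 2 ∣ x n ∧ x n / b ^ 2 ≡ -(a ^ (n - 1)) [ZMOD b] := by
  have hb : (0:ℤ) < b := by linarith
  have hb2 : (b:ℤ)^2 ≠ 0 := pow_ne_zero _ (ne_of_gt hb)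
  have hx2 : x 2 = a * b ^ 3 := by
    have := hrec 0
    rw [hx0, hx1] at this
    rw [this]; ring
  have hx3 : x 3 = b^2 * (a^2*b + b^2 - a^2) := by
    have := hrec 1
    rw [hx1, hx2] at this
    rw [this]; ring
  have hx4 : x 4 = b^2 * (a^3*b + 2*a*b^2 - a^3) := by
    have := hrec 2
    rw [hx2, hx3] at this
    rw [this]; ring
  have key : ∀ k : ℕ, (∃ y, x (k+3) = b^2 * y ∧ y ≡ -(a^(k+2)) [ZMOD b]) ∧
      (∃ y, x (k+4) = b^2 * y ∧ y ≡ -(a^(k+3)) [ZMOD b]) := by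
    intro k
    induction k with
    | zero =>
      constructor
      · exact ⟨a^2*b + b^2 - a^2, hx3, Int.modEq_iff_dvd.mpr ⟨-(a^2 + b), by ring⟩⟩
      · exact ⟨a^3*b + 2*a*b^2 - a^3, hx4,
          Int.modEq_iff_dvd.mpr ⟨-(a^3 + 2*a*b), by ring⟩⟩
    | succ k ih =>
      obtain ⟨⟨y, hy, hy'⟩, ⟨z, hz, hz'⟩⟩ := ih
      refine ⟨⟨z, hz, hz'⟩, ⟨a*z + b*y, ?_, ?_⟩⟩
      · have := hrec (k+3)
        rw [hy, hz] at this
        rw [show k+1+4 = k+3+2 from rfl, this]; ring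
      · have h1 : a*z + b*y ≡ a*(-(a^(k+3))) + 0 [ZMOD b] :=
          Int.ModEq.add (hz'.mul_left a)
            ((Int.modEq_zero_iff_dvd).mpr ⟨y, rfl⟩)
        calc a*z + b*y ≡ a*(-(a^(k+3))) + 0 [ZMOD b] := h1
          _ = -(a^(k+1+3)) := by ring
  refine ⟨hx2, fun n hn => ?_⟩
  obtain ⟨k, rfl⟩ : ∃ k, n = k + 3 := ⟨n - 3, by omega⟩
  obtain ⟨⟨y, hy, hy'⟩, _⟩ := key k
  refine ⟨⟨y, hy⟩, ?_⟩
  rw [hy, Int.mul_ediv_cancel_left _ hb2]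
  have : k + 3 - 1 = k + 2 := rfl
  rw [this]
  exact hy'
end

section
/- Let a be an integer with |a| ≥ 4 such that |a| = p₁^s for some prime p₁ and integer s ≥ 1. Then a(a²−1)(a²−3) has at least three distinct prime factors p₂, p₃, p₄ each different from p₁; specifically, a²−3 has a prime factor different from 2, 3, and p₁, and a²−1 has at least two distinct prime factors, all four primes distinct. -/
lemma key14 (n N p₁ : ℕ) (hn4 : 4 ≤ n) (hN : N = n ^ 2)
    (_hp₁ : Nat.Prime p₁) (hdvd : p₁ ∣ n) :
    ∃ p₂ p₃ p₄ : ℕ, Nat.Prime p₂ ∧ Nat.Prime p₃ ∧ Nat.Prime p₄ ∧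
      p₂ ≠ p₁ ∧ p₃ ≠ p₁ ∧ p₄ ≠ p₁ ∧ p₂ ≠ p₃ ∧ p₂ ≠ p₄ ∧ p₃ ≠ p₄ ∧
      p₄ ≠ 2 ∧ p₄ ≠ 3 ∧ p₄ ∣ N - 3 ∧ p₂ ∣ N - 1 ∧ p₃ ∣ N - 1 := by
  have hN16 : 16 ≤ N := by
    rw [hN]
    calc (16 : ℕ) = 4 ^ 2 := by norm_num
    _ ≤ n ^ 2 := Nat.pow_le_pow_left hn4 2
  have hfacN : N - 1 = (n + 1) * (n - 1) := by
    rw [hN]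
    simpa using Nat.sq_sub_sq n 1
  -- 4 does not divide N - 3
  have h4 : ¬ (4 ∣ N - 3) := by
    rcases Nat.even_or_odd n with ⟨k, hk⟩ | ⟨k, hk⟩
    · obtain ⟨K, hK⟩ : ∃ K, N = 4 * K := ⟨k * k, by rw [hN, hk]; ring⟩
      omega
    · obtain ⟨K, hK⟩ : ∃ K, N = 4 * K + 1 := ⟨k * k + k, by rw [hN, hk]; ring⟩
      omega
  -- 9 does not divide N - 3
  have h9 : ¬ (9 ∣ N - 3) := by
    by_cases h3n : 3 ∣ n
    · obtain ⟨t, ht⟩ := h3n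
      obtain ⟨T, hT⟩ : ∃ T, N = 9 * T := ⟨t * t, by rw [hN, ht]; ring⟩
      omega
    · intro hdvd9
      have h3N : 3 ∣ N := by omega
      rw [hN] at h3N
      exact h3n (Nat.Prime.dvd_of_dvd_pow Nat.prime_three h3N)
  -- pick a prime factor of N - 3 outside {2, 3}
  obtain ⟨c, hcdvd, hc2, hc2d, hc3d⟩ :
      ∃ c, c ∣ N - 3 ∧ 2 ≤ c ∧ ¬ 2 ∣ c ∧ ¬ 3 ∣ c := by
    by_cases h2 : 2 ∣ N - 3 <;> by_cases h3 : 3 ∣ N - 3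
    · exact ⟨(N - 3) / 6, Nat.div_dvd_of_dvd (by omega), by omega, by omega, by omega⟩
    · exact ⟨(N - 3) / 2, Nat.div_dvd_of_dvd h2, by omega, by omega, by omega⟩
    · exact ⟨(N - 3) / 3, Nat.div_dvd_of_dvd h3, by omega, by omega, by omega⟩
    · exact ⟨N - 3, dvd_rfl, by omega, h2, h3⟩
  set p₄ := Nat.minFac c with hp₄def
  have hp₄ : p₄.Prime := Nat.minFac_prime (by omega)
  have hp₄d : p₄ ∣ N - 3 := (Nat.minFac_dvd c).trans hcdvd
  have hp₄2 : p₄ ≠ 2 := fun h => hc2d (h ▸ Nat.minFac_dvd c)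
  have hp₄3 : p₄ ≠ 3 := fun h => hc3d (h ▸ Nat.minFac_dvd c)
  have hp₄p₁ : p₄ ≠ p₁ := by
    intro h
    have h1 : p₄ ∣ n := h ▸ hdvd
    have h2 : p₄ ∣ N := by rw [hN]; exact dvd_pow h1 two_ne_zero
    have h3 : p₄ ∣ 3 := by
      have := Nat.dvd_sub h2 hp₄d
      simpa [show N - (N - 3) = 3 by omega] using this
    exact hp₄3 ((Nat.prime_dvd_prime_iff_eq hp₄ Nat.prime_three).mp h3)
  -- generic facts about prime divisors of N - 1
  have hne1 : ∀ q, Nat.Prime q → q ∣ N - 1 → q ≠ p₁ := by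
    intro q hq hqd he
    have hqn : q ∣ n := he ▸ hdvd
    have h2 : q ∣ N := by rw [hN]; exact dvd_pow hqn two_ne_zero
    have h1 : q ∣ 1 := by
      have := Nat.dvd_sub h2 hqd
      simpa [show N - (N - 1) = 1 by omega] using this
    exact hq.one_lt.ne' (Nat.dvd_one.mp h1)
  have hcross : ∀ q, Nat.Prime q → q ∣ N - 1 → q ≠ p₄ := by
    intro q hq hqd he
    have h2 : p₄ ∣ 2 := by
      have := Nat.dvd_sub (he ▸ hqd) hp₄d
      simpa [show (N - 1) - (N - 3) = 2 by omega] using this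
    exact hp₄2 ((Nat.prime_dvd_prime_iff_eq hp₄ Nat.prime_two).mp h2)
  -- two distinct primes dividing N - 1
  have hmain : ∃ p₂ p₃, Nat.Prime p₂ ∧ Nat.Prime p₃ ∧ p₂ ≠ p₃ ∧ p₂ ∣ N - 1 ∧ p₃ ∣ N - 1 := by
    by_cases h2n : 2 ∣ n
    · refine ⟨(n - 1).minFac, (n + 1).minFac, Nat.minFac_prime (by omega),
        Nat.minFac_prime (by omega), ?_, ?_, ?_⟩
      · intro he
        have hd2 : (n - 1).minFac ∣ 2 := by
          have := Nat.dvd_sub (he ▸ Nat.minFac_dvd (n + 1)) (Nat.minFac_dvd (n - 1))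
          simpa [show (n + 1) - (n - 1) = 2 by omega] using this
        have hq2 : (n - 1).minFac = 2 :=
          (Nat.prime_dvd_prime_iff_eq (Nat.minFac_prime (by omega)) Nat.prime_two).mp hd2
        have : 2 ∣ n - 1 := hq2 ▸ Nat.minFac_dvd (n - 1)
        omega
      · exact (Nat.minFac_dvd (n - 1)).trans (hfacN ▸ dvd_mul_left (n - 1) (n + 1))
      · exact (Nat.minFac_dvd (n + 1)).trans (hfacN ▸ dvd_mul_right (n + 1) (n - 1))
    · -- n odd
      have hn5 : 5 ≤ n := by omega
      have hNne : N - 1 ≠ 0 := by omega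
      have h2N1 : 2 ∣ N - 1 := by
        obtain ⟨k, hk⟩ : ∃ k, n = 2 * k + 1 := ⟨n / 2, by omega⟩
        obtain ⟨K, hK⟩ : ∃ K, N = 4 * K + 1 := ⟨k * k + k, by rw [hN, hk]; ring⟩
        omega
      set c2 := (N - 1) / 2 ^ (N - 1).factorization 2 with hc2def
      have hc2ne1 : c2 ≠ 1 := by
        intro h1
        have hself := Nat.ordProj_mul_ordCompl_eq_self (N - 1) 2
        rw [← hc2def] at hself
        rw [h1, mul_one] at hself
        have hd1 : n - 1 ∣ 2 ^ (N - 1).factorization 2 := by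
          rw [hself]
          exact hfacN ▸ dvd_mul_left (n - 1) (n + 1)
        have hd2 : n + 1 ∣ 2 ^ (N - 1).factorization 2 := by
          rw [hself]
          exact hfacN ▸ dvd_mul_right (n + 1) (n - 1)
        obtain ⟨i, _, hieq⟩ := (Nat.dvd_prime_pow Nat.prime_two).mp hd1
        obtain ⟨j, _, hjeq⟩ := (Nat.dvd_prime_pow Nat.prime_two).mp hd2
        have hi2 : 2 ≤ i := by
          by_contra hlt
          have : 2 ^ i ≤ 2 ^ 1 := Nat.pow_le_pow_right (by norm_num) (by omega)
          omega
        have hj2 : 2 ≤ j := by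
          by_contra hlt
          have : 2 ^ j ≤ 2 ^ 1 := Nat.pow_le_pow_right (by norm_num) (by omega)
          omega
        have h4i : (4 : ℕ) ∣ n - 1 := by
          rw [hieq]
          exact (show (4:ℕ) = 2 ^ 2 by norm_num) ▸ pow_dvd_pow 2 hi2
        have h4j : (4 : ℕ) ∣ n + 1 := by
          rw [hjeq]
          exact (show (4:ℕ) = 2 ^ 2 by norm_num) ▸ pow_dvd_pow 2 hj2
        omega
      have hc2pos : 0 < c2 := Nat.ordCompl_pos 2 hNne
      have hc2nd : ¬ 2 ∣ c2 := Nat.not_dvd_ordCompl Nat.prime_two hNne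
      refine ⟨2, c2.minFac, Nat.prime_two, Nat.minFac_prime (by omega), ?_, h2N1, ?_⟩
      · intro he
        exact hc2nd (he ▸ Nat.minFac_dvd c2)
      · exact (Nat.minFac_dvd c2).trans (Nat.ordCompl_dvd (N - 1) 2)
  obtain ⟨p₂, p₃, hp₂, hp₃, hne23, hd2, hd3⟩ := hmain
  exact ⟨p₂, p₃, p₄, hp₂, hp₃, hp₄, hne1 p₂ hp₂ hd2, hne1 p₃ hp₃ hd3, hp₄p₁, hne23,
    hcross p₂ hp₂ hd2, hcross p₃ hp₃ hd3, hp₄2, hp₄3, hp₄d, hd2, hd3⟩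

theorem stmt14 (a : ℤ) (ha : 4 ≤ |a|) (p₁ : ℕ) (s : ℕ)
    (hp₁ : Nat.Prime p₁) (hs : 1 ≤ s) (haps : a.natAbs = p₁ ^ s) :
    ∃ p₂ p₃ p₄ : ℕ, Nat.Prime p₂ ∧ Nat.Prime p₃ ∧ Nat.Prime p₄ ∧
      p₂ ≠ p₁ ∧ p₃ ≠ p₁ ∧ p₄ ≠ p₁ ∧ p₂ ≠ p₃ ∧ p₂ ≠ p₄ ∧ p₃ ≠ p₄ ∧
      p₄ ≠ 2 ∧ p₄ ≠ 3 ∧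
      (p₄ : ℤ) ∣ a ^ 2 - 3 ∧ (p₂ : ℤ) ∣ a ^ 2 - 1 ∧ (p₃ : ℤ) ∣ a ^ 2 - 1 ∧
      (p₂ : ℤ) ∣ a * (a ^ 2 - 1) * (a ^ 2 - 3) ∧
      (p₃ : ℤ) ∣ a * (a ^ 2 - 1) * (a ^ 2 - 3) ∧
      (p₄ : ℤ) ∣ a * (a ^ 2 - 1) * (a ^ 2 - 3) := by
  have hn4 : 4 ≤ a.natAbs := by
    rw [Int.abs_eq_natAbs] at ha
    exact_mod_cast ha
  have hdvd : p₁ ∣ a.natAbs := haps ▸ dvd_pow_self p₁ (by omega)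
  obtain ⟨p₂, p₃, p₄, hp₂, hp₃, hp₄, h21, h31, h41, h23, h24, h34, h42, h43, hd4, hd2, hd3⟩ :=
    key14 a.natAbs (a.natAbs ^ 2) p₁ hn4 rfl hp₁ hdvd
  have hN16 : 16 ≤ a.natAbs ^ 2 :=
    le_trans (by norm_num) (Nat.pow_le_pow_left hn4 2)
  have hcast1 : ((a.natAbs ^ 2 - 1 : ℕ) : ℤ) = a ^ 2 - 1 := by
    rw [Nat.cast_sub (by omega)]; push_cast; rw [sq_abs]
  have hcast3 : ((a.natAbs ^ 2 - 3 : ℕ) : ℤ) = a ^ 2 - 3 := by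
    rw [Nat.cast_sub (by omega)]; push_cast; rw [sq_abs]
  have hd2' : (p₂ : ℤ) ∣ a ^ 2 - 1 := hcast1 ▸ Int.natCast_dvd_natCast.mpr hd2
  have hd3' : (p₃ : ℤ) ∣ a ^ 2 - 1 := hcast1 ▸ Int.natCast_dvd_natCast.mpr hd3
  have hd4' : (p₄ : ℤ) ∣ a ^ 2 - 3 := hcast3 ▸ Int.natCast_dvd_natCast.mpr hd4
  exact ⟨p₂, p₃, p₄, hp₂, hp₃, hp₄, h21, h31, h41, h23, h24, h34, h42, h43,
    hd4', hd2', hd3', (hd2'.mul_left a).mul_right _, (hd3'.mul_left a).mul_right _,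
    hd4'.mul_left _⟩
end

section
/- Let a be an integer with |a| ≥ 3 and let (u_n) be the Lucas sequence u_0 = 0, u_1 = 1, u_{n+1} = a·u_n − u_{n-1}. Then |u_n| is composite for all n ≥ 3. -/
private lemma lucas_add (a : ℤ) (u : ℕ → ℤ)
    (hu0 : u 0 = 0) (hu1 : u 1 = 1)
    (hrec : ∀ n : ℕ, u (n + 2) = a * u (n + 1) - u n) :
    ∀ m n : ℕ, u (m + n + 1) = u (m + 1) * u (n + 1) - u m * u n := by
  intro m n
  induction n using Nat.twoStepInduction with
  | zero => simp [hu0, hu1]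
  | one =>
    have h2 : u 2 = a := by have := hrec 0; rw [hu0, hu1] at this; linarith
    have := hrec m
    simp only [hu1, h2]
    have e : m + 1 + 1 = m + 2 := by ring
    rw [e, this]; ring
  | more n ih1 ih2 =>
    have e : m + (n + 2) + 1 = (m + n + 1) + 2 := by ring
    have e2 : m + (n + 1) + 1 = (m + n + 1) + 1 := by ring
    rw [e, hrec (m + n + 1)]
    rw [e2] at ih2
    rw [ih2, ih1]
    have h1 := hrec n
    have h2 := hrec (n + 1)
    have e3 : n + 1 + 2 = n + 3 := by ring
    have e4 : n + 2 + 1 = n + 3 := by ring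
    rw [e3] at h2
    rw [e4, h2, h1]
    ring

private lemma lucas_grow (a : ℤ) (ha : 3 ≤ |a|) (u : ℕ → ℤ)
    (hu0 : u 0 = 0) (hu1 : u 1 = 1)
    (hrec : ∀ n : ℕ, u (n + 2) = a * u (n + 1) - u n) :
    ∀ k : ℕ, 1 ≤ |u (k + 1)| ∧ 2 * |u (k + 1)| + 1 ≤ |u (k + 2)| := by
  intro k
  induction k with
  | zero =>
    have h2 : u 2 = a := by have := hrec 0; rw [hu0, hu1] at this; linarith
    simp only [hu1, h2, abs_one]
    constructor
    · norm_num
    · linarith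
  | succ k ih =>
    obtain ⟨ih1, ih2⟩ := ih
    have h1 : 1 ≤ |u (k + 2)| := by linarith [abs_nonneg (u (k + 1))]
    refine ⟨h1, ?_⟩
    have h3 : u (k + 3) = a * u (k + 2) - u (k + 1) := by
      have := hrec (k + 1); convert this using 3 <;> ring
    have h4 : |a * u (k + 2)| - |u (k + 1)| ≤ |a * u (k + 2) - u (k + 1)| :=
      abs_sub_abs_le_abs_sub _ _
    rw [abs_mul] at h4
    have e : k + 1 + 2 = k + 3 := by ring
    rw [e]
    have h5 : 3 * |u (k + 2)| ≤ |a| * |u (k + 2)| := by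
      nlinarith [abs_nonneg (u (k + 2))]
    rw [h3] at *
    linarith

private lemma not_prime_of_factors (m x y : ℕ) (h : m = x * y)
    (hx : 2 ≤ x) (hy : 2 ≤ y) : m ≠ 0 ∧ m ≠ 1 ∧ ¬ Nat.Prime m := by
  subst h
  refine ⟨by positivity, ?_, Nat.not_prime_mul (by omega) (by omega)⟩
  have := Nat.mul_le_mul hx hy
  omega

theorem stmt18 (a : ℤ) (ha : 3 ≤ |a|) (u : ℕ → ℤ)
    (hu0 : u 0 = 0) (hu1 : u 1 = 1)
    (hrec : ∀ n : ℕ, u (n + 2) = a * u (n + 1) - u n) :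
    ∀ n : ℕ, 3 ≤ n →
      (u n).natAbs ≠ 0 ∧ (u n).natAbs ≠ 1 ∧ ¬ Nat.Prime (u n).natAbs := by
  have add := lucas_add a u hu0 hu1 hrec
  have grow := lucas_grow a ha u hu0 hu1 hrec
  intro n hn
  rcases Nat.even_or_odd n with ⟨k, hk⟩ | ⟨k, hk⟩
  · -- n = 2k, k ≥ 2; write k = j+1, n = (j+1) + j + 1
    obtain ⟨j, hj⟩ : ∃ j, k = j + 1 := ⟨k - 1, by omega⟩
    have hfact : u n = u (j + 1) * (u (j + 2) - u j) := by
      have := add (j + 1) j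
      have e : j + 1 + j + 1 = n := by omega
      rw [e] at this
      have e2 : j + 1 + 1 = j + 2 := by ring
      rw [e2] at this
      rw [this]; ring
    have hj1 : 1 ≤ j := by omega
    obtain ⟨j', hj'⟩ : ∃ j', j = j' + 1 := ⟨j - 1, by omega⟩
    obtain ⟨g1, g2⟩ := grow j
    obtain ⟨g3, g4⟩ := grow j'
    have e5 : j' + 1 = j := by omega
    have e6 : j' + 2 = j + 1 := by omega
    rw [e5] at g3
    rw [e6, e5] at g4
    -- |u (j+1)| ≥ 3, |u (j+2) - u j| ≥ 2
    have hx : 3 ≤ |u (j + 1)| := by linarith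
    have hy : 2 ≤ |u (j + 2) - u j| := by
      have := abs_sub_abs_le_abs_sub (u (j + 2)) (u j)
      linarith
    refine not_prime_of_factors _ (u (j + 1)).natAbs ((u (j + 2) - u j)).natAbs ?_ ?_ ?_
    · rw [hfact, Int.natAbs_mul]
    · rw [Int.abs_eq_natAbs] at hx; omega
    · rw [Int.abs_eq_natAbs] at hy; omega
  · -- n = 2k+1, k ≥ 1
    have hk1 : 1 ≤ k := by omega
    have hfact : u n = (u (k + 1) - u k) * (u (k + 1) + u k) := by
      have := add k k
      have e : k + k + 1 = n := by omega
      rw [e] at this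
      rw [this]; ring
    obtain ⟨j', hj'⟩ : ∃ j', k = j' + 1 := ⟨k - 1, by omega⟩
    obtain ⟨g1, g2⟩ := grow j'
    have e5 : j' + 1 = k := by omega
    have e6 : j' + 2 = k + 1 := by omega
    rw [e5] at g1
    rw [e6, e5] at g2
    have habs : |u k| + 2 ≤ |u (k + 1)| := by linarith
    have hx : 2 ≤ |u (k + 1) - u k| := by
      have := abs_sub_abs_le_abs_sub (u (k + 1)) (u k)
      linarith
    have hy : 2 ≤ |u (k + 1) + u k| := by
      have h1 : |u (k + 1)| - |(-(u k))| ≤ |u (k + 1) - (-(u k))| :=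
        abs_sub_abs_le_abs_sub _ _
      rw [abs_neg] at h1
      have e : u (k + 1) - -u k = u (k + 1) + u k := by ring
      rw [e] at h1
      linarith
    refine not_prime_of_factors _ (u (k + 1) - u k).natAbs (u (k + 1) + u k).natAbs ?_ ?_ ?_
    · rw [hfact, Int.natAbs_mul]
    · rw [Int.abs_eq_natAbs] at hx; omega
    · rw [Int.abs_eq_natAbs] at hy; omega
end

section
/- Let a be an integer with |a| ≥ 3 and p a prime with p > |a|. Then there is no integer u and choice of sign ± such that u² ± a·p·u + p² − 1 = 0. Equivalently, (a²−4)p² + 4 is not a perfect square. -/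
theorem stmt19 (a : ℤ) (ha : 3 ≤ |a|) (p : ℕ) (hp : Nat.Prime p)
    (hpa : |a| < (p : ℤ)) :
    (¬ ∃ (u ε : ℤ), (ε = 1 ∨ ε = -1) ∧
        u ^ 2 + ε * a * (p : ℤ) * u + (p : ℤ) ^ 2 - 1 = 0) ∧
    ¬ ∃ c : ℤ, c ^ 2 = (a ^ 2 - 4) * (p : ℤ) ^ 2 + 4 := by
  have hppz : Prime ((p : ℤ)) := Nat.prime_iff_prime_int.mp hp
  have h3 : 3 < p := by exact_mod_cast ha.trans_lt hpa
  have h4 : p ≠ 4 := by rintro rfl; norm_num at hp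
  have h5 : 5 ≤ p := by omega
  have hq5 : (5 : ℤ) ≤ (p : ℤ) := by exact_mod_cast h5
  have ha2 : 9 ≤ a ^ 2 := by nlinarith [sq_abs a]
  have ha2q : a ^ 2 < (p : ℤ) ^ 2 := by nlinarith [sq_abs a, abs_nonneg a]
  have key : ¬ ∃ c : ℤ, c ^ 2 = (a ^ 2 - 4) * (p : ℤ) ^ 2 + 4 := by
    rintro ⟨c, hc⟩
    set q : ℤ := (p : ℤ) with hqdef
    set d : ℤ := |c| with hddef
    have hd0 : 0 ≤ d := abs_nonneg c
    have hd : d ^ 2 = (a ^ 2 - 4) * q ^ 2 + 4 := by rw [hddef, sq_abs]; exact hc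
    have h2q : 2 * q < d := by nlinarith
    have hdlt : d < q ^ 2 := by nlinarith
    have hdvd : q ^ 2 ∣ (d - 2) * (d + 2) := ⟨a ^ 2 - 4, by linear_combination hd⟩
    have hq1 : q ∣ (d - 2) * (d + 2) := dvd_trans (dvd_pow_self q (by norm_num)) hdvd
    have hnot : ¬ (q ∣ d - 2 ∧ q ∣ d + 2) := by
      rintro ⟨h1, h2⟩
      have : q ∣ 4 := by
        have := dvd_sub h2 h1
        simpa using this
      have := Int.le_of_dvd (by norm_num) this
      linarith
    rcases (hppz.dvd_mul.mp hq1) with h1 | h2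
    · have h2' : ¬ q ∣ d + 2 := fun h => hnot ⟨h1, h⟩
      have hdd : q ^ 2 ∣ d - 2 := by
        rcases hdvd with ⟨k, hk⟩
        have := (Prime.pow_dvd_of_dvd_mul_right hppz 2 h2' (by rw [mul_comm] at hk ⊢; exact ⟨k, hk⟩))
        exact this
      have hle := Int.le_of_dvd (by linarith) hdd
      linarith
    · have h1' : ¬ q ∣ d - 2 := fun h => hnot ⟨h, h2⟩
      have hdd : q ^ 2 ∣ d + 2 := Prime.pow_dvd_of_dvd_mul_left hppz 2 h1' hdvd
      have hle := Int.le_of_dvd (by linarith) hdd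
      rcases hdd with ⟨k, hk⟩
      have hk1 : k = 1 := by nlinarith
      subst hk1
      rw [mul_one] at hk
      -- d = q^2 - 2
      have : (q ^ 2 - 2) ^ 2 = (a ^ 2 - 4) * q ^ 2 + 4 := by
        rw [← hd]; congr 1; linarith
      nlinarith
  refine ⟨?_, key⟩
  rintro ⟨u, ε, hε, h⟩
  rcases hε with rfl | rfl
  · exact key ⟨2 * u + a * (p : ℤ), by linear_combination 4 * h⟩
  · exact key ⟨2 * u - a * (p : ℤ), by linear_combination 4 * h⟩
end
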